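/- arXiv:1812.11165 — 2 statements merged into one kernel-verified Lean document; each statement's English description precedes it below -/
import Mathlib

section
/- Let A be a unital C*-algebra and let a ∈ A. Then there exists a sequence (c_n)_{n∈ℕ} in A such that ‖c_n‖ ≤ 1 for all n ∈ ℕ and c_n a converges in norm to |a| as n → ∞. -/
/-!
With `b = a⋆a` and `ε > 0`, the element `c = (b + ε)^{-1/2} a⋆` is a contraction, because
`c c⋆ = b (b + ε)⁻¹` and `t / (t + ε) ≤ 1` for `t ≥ 0`. Moreover `c a = b (b + ε)^{-1/2}`, and
`|t / √(t + ε) - √t| ≤ √ε` on `[0, ∞)`, so `‖c a - √b‖ ≤ √ε` by the continuous functional calculus.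
Letting `ε → 0` gives the sequence.
-/

theorem Real.abs_div_sqrt_add_sub_sqrt_le {t ε : ℝ} (ht : 0 ≤ t) (hε : 0 ≤ ε) :
    |t / √(t + ε) - √t| ≤ √ε := by
  rcases ht.eq_or_lt with rfl | ht
  · simp
  have hs : √t ^ 2 = t := Real.sq_sqrt ht.le
  have hu : √(t + ε) ^ 2 = t + ε := Real.sq_sqrt (by linarith)
  have hr : √ε ^ 2 = ε := Real.sq_sqrt hε
  have hu0 : 0 < √(t + ε) := Real.sqrt_pos.2 (by linarith)
  have hsu : √t ≤ √(t + ε) := Real.sqrt_le_sqrt (by linarith)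
  have hur : √(t + ε) ≤ √t + √ε := by
    nlinarith [Real.sqrt_nonneg t, Real.sqrt_nonneg ε]
  have hdiv : t / √(t + ε) ≤ √t := by
    rw [div_le_iff₀ hu0]; nlinarith [Real.sqrt_nonneg t]
  rw [abs_sub_comm, abs_of_nonneg (sub_nonneg.2 hdiv), sub_le_comm, le_div_iff₀ hu0]
  nlinarith [Real.sqrt_nonneg t, Real.sqrt_nonneg ε]

section
variable {A : Type*} [CStarAlgebra A]

lemma cfc_star_mul_self_mul_star_mul (f : ℝ → ℝ) (a : A)
    (hf : ContinuousOn f (spectrum ℝ (star a * a)) := by cfc_cont_tac) :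
    cfc f (star a * a) * star a * a = cfc (fun t => f t * t) (star a * a) := by
  rw [mul_assoc, cfc_mul f (fun t => t) (star a * a), cfc_id' ℝ (star a * a)]

lemma norm_cfc_star_mul_self_mul_star_sq (f : ℝ → ℝ) (a : A)
    (hf : ContinuousOn f (spectrum ℝ (star a * a)) := by cfc_cont_tac) :
    ‖cfc f (star a * a) * star a‖ ^ 2 = ‖cfc (fun t => f t ^ 2 * t) (star a * a)‖ := by
  have hsa : IsSelfAdjoint (cfc f (star a * a)) := cfc_predicate _ _
  rw [sq, ← CStarRing.norm_self_mul_star, star_mul, star_star, hsa.star_eq, ← mul_assoc,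
    cfc_star_mul_self_mul_star_mul f a hf, ← cfc_mul _ f (star a * a)]
  congr 2
  ext t
  ring

end

section
variable {A : Type*} [CStarAlgebra A] [PartialOrder A] [StarOrderedRing A]

lemma CFC.sqrt_eq_cfc_real_sqrt (b : A) (hb : 0 ≤ b := by cfc_tac) :
    CFC.sqrt b = cfc Real.sqrt b := by
  rw [CFC.sqrt_eq_real_sqrt b hb, cfcₙ_eq_cfc]

lemma exists_norm_le_one_norm_mul_sub_sqrt_le (a : A) {ε : ℝ} (hε : 0 < ε) :
    ∃ c : A, ‖c‖ ≤ 1 ∧ ‖c * a - CFC.sqrt (star a * a)‖ ≤ √ε := by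
  have hspec : ∀ t ∈ spectrum ℝ (star a * a), 0 ≤ t := fun t ht =>
    spectrum_nonneg_of_nonneg (star_mul_self_nonneg a) ht
  set f : ℝ → ℝ := fun t => (√(t + ε))⁻¹
  have hf : ContinuousOn f (spectrum ℝ (star a * a)) :=
    ContinuousOn.inv₀ (by fun_prop) fun t ht => (Real.sqrt_pos.2 (by linarith [hspec t ht])).ne'
  refine ⟨cfc f (star a * a) * star a, ?_, ?_⟩
  · rw [← pow_le_one_iff_of_nonneg (norm_nonneg _) two_ne_zero,
      norm_cfc_star_mul_self_mul_star_sq f a hf]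
    refine norm_cfc_le zero_le_one fun t ht => ?_
    have htε : 0 < t + ε := by linarith [hspec t ht]
    rw [inv_pow, Real.sq_sqrt htε.le, Real.norm_eq_abs, abs_of_nonneg (by positivity [hspec t ht]),
      inv_mul_le_one₀ htε]
    linarith
  · rw [cfc_star_mul_self_mul_star_mul f a hf, CFC.sqrt_eq_cfc_real_sqrt (star a * a), ← cfc_sub ..]
    refine norm_cfc_le (Real.sqrt_nonneg ε) fun t ht => ?_
    rw [Real.norm_eq_abs, ← div_eq_inv_mul]
    exact Real.abs_div_sqrt_add_sub_sqrt_le (hspec t ht) hε.le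

end

/-- **Lemma 3.** Let `A` be a unital C*-algebra and `a ∈ A`. Then there
is a sequence `(cₙ)` in `A` with `‖cₙ‖ ≤ 1` for all `n` such that `cₙ * a` converges in
norm to `|a| = √(a* a)` (the positive square root given by the continuous functional
calculus). -/
theorem exists_contraction_seq_tendsto_abs
    (A : Type*) [CStarAlgebra A] [PartialOrder A] [StarOrderedRing A]
    (a : A) :
    ∃ c : ℕ → A, (∀ n, ‖c n‖ ≤ 1) ∧
      Filter.Tendsto (fun n => c n * a) Filter.atTop (nhds (CFC.sqrt (star a * a))) := by
  have hmem : CFC.sqrt (star a * a) ∈ closure ((· * a) '' Metric.closedBall 0 1) := by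
    refine Metric.mem_closure_iff.2 fun δ hδ => ?_
    obtain ⟨c, hc, hca⟩ := exists_norm_le_one_norm_mul_sub_sqrt_le a (pow_pos (half_pos hδ) 2)
    refine ⟨c * a, ⟨c, by simpa using hc, rfl⟩, ?_⟩
    rw [Real.sqrt_sq (half_pos hδ).le] at hca
    rw [dist_comm, dist_eq_norm]
    linarith
  obtain ⟨x, hx, hlim⟩ := mem_closure_iff_seq_limit.1 hmem
  choose c hc hcx using hx
  refine ⟨c, fun n => by simpa using hc n, ?_⟩
  simpa only [hcx] using hlim
end

section
/- Let 1 < p < ∞, let J be a set, let A be a unital C*-algebra, and let φ : A → B(l^p(J)) be a unital homomorphism. Let a₀ ∈ A with φ(a₀) ≠ 0. Then there exist x₀ ∈ l^p(J) and a bounded linear functional y₀* on l^p(J) such that ω : A → ℂ defined by ω(a) = y₀*(φ(a)x₀) is a positive linear functional with ω(a₀* a₀) ≠ 0. -/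
/-!
Renorm `ℓᵖ(J)` by `|||z||| = max (sup_{‖a‖ ≤ 1} ‖φ a z‖) ‖z‖`, an equivalent complete norm for
which every `φ a` has norm at most `‖a‖`.

In a complex Banach space a nonzero operator `T` has a nonzero spatial numerical value `g (T x)`,
`g` a norming functional of `x`. Otherwise `‖z + h • T z‖ = ‖z‖ + O(h²)` for every `z`, so
`u ↦ ‖exp (u • T) x‖` has zero derivative; then `u ↦ exp (u • T) x` is a bounded entire function,
constant by Liouville, and `T x = 0`.

Applied to `T = φ a₀` in the new norm this gives `x` and `g`, and `ω a = g (φ a x) / |||x|||` is a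
linear functional on `A` with `ω 1 = 1` and `‖ω‖ ≤ 1`, hence a state: testing
`‖h + it‖² ≤ ‖h‖² + t²` shows that it is real on self-adjoint elements, and `‖‖b‖ - b‖ ≤ ‖b‖`
that it is positive. Since `ω a₀ = g (T x) / |||x||| ≠ 0`, Cauchy–Schwarz
`|ω a₀|² ≤ ω (a₀⋆ a₀)` concludes.
-/

open NormedSpace Asymptotics
open scoped ENNReal ComplexOrder

theorem hasDerivAt_exp_smul_apply {F : Type*} [NormedAddCommGroup F] [NormedSpace ℂ F]
    [CompleteSpace F] (T : F →L[ℂ] F) (x : F) (w : ℂ) :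
    HasDerivAt (fun u : ℂ => exp (u • T) x) (T (exp (w • T) x)) w := by
  simpa using (hasDerivAt_exp_smul_const' (𝕂 := ℂ) T w).clm_apply (hasDerivAt_const w x)

namespace ContinuousLinearMap

section NumericalRange

variable {F : Type*} [NormedAddCommGroup F] [NormedSpace ℂ F] {T : F →L[ℂ] F}
  (hT : ∀ (x : F) (g : StrongDual ℂ F), ‖g‖ = 1 → g x = ‖x‖ → g (T x) = 0)
include hT

theorem norm_le_norm_add_smul_apply (z : F) (h : ℂ) : ‖z‖ ≤ ‖z + h • T z‖ := by
  rcases eq_or_ne z 0 with rfl | hz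
  · simp
  obtain ⟨g, hg, hgz⟩ := exists_dual_vector ℂ z (norm_ne_zero_iff.mpr hz)
  calc ‖z‖ = ‖g (z + h • T z)‖ := by simp [hgz, hT z g hg hgz]
    _ ≤ ‖z + h • T z‖ := by simpa [hg] using g.le_opNorm (z + h • T z)

theorem norm_add_smul_apply_le (z : F) (h : ℂ) :
    ‖z + h • T z‖ ≤ ‖z‖ + ‖h‖ ^ 2 * ‖T (T z)‖ := by
  set w := z + h • T z
  rcases eq_or_ne w 0 with hw | hw
  · rw [hw, norm_zero]; positivity
  obtain ⟨g, hg, hgw⟩ := exists_dual_vector ℂ w (norm_ne_zero_iff.mpr hw)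
  have hgTz : g (T z) = -(h * g (T (T z))) := by
    have := hT w g hg hgw
    simp only [w, map_add, map_smul, smul_eq_mul] at this
    linear_combination this
  have hgw' : g w = g z - h ^ 2 * g (T (T z)) := by
    simp only [w, map_add, map_smul, smul_eq_mul, hgTz]; ring
  have hgle : ∀ y, ‖g y‖ ≤ ‖y‖ := fun y => by simpa [hg] using g.le_opNorm y
  calc ‖w‖ = ‖g z - h ^ 2 * g (T (T z))‖ := by rw [← hgw', hgw]; simp
    _ ≤ ‖g z‖ + ‖h‖ ^ 2 * ‖g (T (T z))‖ :=
        (norm_sub_le _ _).trans_eq (by rw [norm_mul, norm_pow])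
    _ ≤ ‖z‖ + ‖h‖ ^ 2 * ‖T (T z)‖ := by gcongr <;> exact hgle _

theorem abs_norm_add_smul_apply_sub_norm_le (z : F) (h : ℂ) :
    |‖z + h • T z‖ - ‖z‖| ≤ ‖h‖ ^ 2 * ‖T (T z)‖ := by
  have := norm_le_norm_add_smul_apply hT z h
  have := norm_add_smul_apply_le hT z h
  rw [abs_le]; constructor <;> linarith

variable [CompleteSpace F]

theorem hasFDerivAt_norm_exp_smul_apply (x : F) (w : ℂ) :
    HasFDerivAt (fun u : ℂ => ‖exp (u • T) x‖) (0 : ℂ →L[ℝ] ℝ) w := by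
  set z := exp (w • T) x
  set r : ℂ → F := fun h => exp ((w + h) • T) x - (z + h • T z)
  have hr : r =o[nhds 0] fun h => h := by
    have := hasDerivAt_iff_isLittleO_nhds_zero.mp (hasDerivAt_exp_smul_apply T x w)
    simp only [sub_sub] at this
    exact this
  have hquad : (fun h : ℂ => ‖h‖ ^ 2 * ‖T (T z)‖) =o[nhds 0] id :=
    (isLittleO_norm_pow_id one_lt_two).mul_isBigO (isBigO_const_const _ one_ne_zero _)
      |>.congr_right (by simp)
  have hbound : ∀ h : ℂ, |‖exp ((w + h) • T) x‖ - ‖z‖| ≤ ‖h‖ ^ 2 * ‖T (T z)‖ + ‖r h‖ :=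
    fun h => calc
      _ ≤ |‖exp ((w + h) • T) x‖ - ‖z + h • T z‖| + |‖z + h • T z‖ - ‖z‖| := abs_sub_le _ _ _
      _ ≤ ‖r h‖ + ‖h‖ ^ 2 * ‖T (T z)‖ :=
        add_le_add (abs_norm_sub_norm_le _ _) (abs_norm_add_smul_apply_sub_norm_le hT z h)
      _ = _ := add_comm _ _
  rw [hasFDerivAt_iff_isLittleO_nhds_zero]
  refine IsBigO.trans_isLittleO ?_ (hquad.add hr.norm_left)
  refine isBigO_of_le _ fun h => ?_
  simpa [Real.norm_eq_abs, abs_of_nonneg (by positivity : 0 ≤ ‖h‖ ^ 2 * ‖T (T z)‖ + ‖r h‖)]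
    using hbound h

theorem norm_exp_smul_apply (x : F) (w : ℂ) : ‖exp (w • T) x‖ = ‖x‖ := by
  have hd := hasFDerivAt_norm_exp_smul_apply hT x
  simpa using is_const_of_fderiv_eq_zero (𝕜 := ℝ) (fun u => (hd u).differentiableAt)
    (fun u => (hd u).fderiv) w 0

theorem eq_zero_of_forall_norming_apply_eq_zero : T = 0 := by
  ext x
  have hd := hasDerivAt_exp_smul_apply T x
  have hbdd : Bornology.IsBounded (Set.range fun u : ℂ => exp (u • T) x) :=
    isBounded_iff_forall_norm_le.mpr ⟨‖x‖, by simp [norm_exp_smul_apply hT]⟩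
  have hconst : (fun u : ℂ => exp (u • T) x) = fun _ => x := funext fun u => by
    simpa using Differentiable.apply_eq_apply_of_bounded (fun w => (hd w).differentiableAt) hbdd u 0
  have h0 := hd 0
  rw [hconst] at h0
  simpa using ((hasDerivAt_const (0 : ℂ) x).unique h0).symm

end NumericalRange

theorem exists_norming_apply_ne_zero {F : Type*} [NormedAddCommGroup F] [NormedSpace ℂ F]
    [CompleteSpace F] {T : F →L[ℂ] F} (hT : T ≠ 0) :
    ∃ (x : F) (g : StrongDual ℂ F), ‖g‖ = 1 ∧ g x = ‖x‖ ∧ g (T x) ≠ 0 := by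
  contrapose! hT
  exact eq_zero_of_forall_norming_apply_eq_zero hT

end ContinuousLinearMap

section ContractiveRenorm

variable {A X : Type*} [NonUnitalNormedRing A] [NormedSpace ℂ A]
  [NormedAddCommGroup X] [NormedSpace ℂ X]

/-- `X` with the norm `max ‖φ.flip z‖ ‖z‖`, pulled back along `z ↦ (φ.flip z, z)`. -/
def Renorm (_φ : A →L[ℂ] (X →L[ℂ] X)) : Type _ := X

namespace Renorm

variable (φ : A →L[ℂ] (X →L[ℂ] X))

instance : AddCommGroup (Renorm φ) := inferInstanceAs (AddCommGroup X)
instance : Module ℂ (Renorm φ) := inferInstanceAs (Module ℂ X)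

def linearEquiv : X ≃ₗ[ℂ] Renorm φ := LinearEquiv.refl ℂ X

noncomputable def graph : Renorm φ →ₗ[ℂ] (A →L[ℂ] X) × X :=
  (φ.flip.toLinearMap.prod LinearMap.id) ∘ₗ (linearEquiv φ).symm.toLinearMap

noncomputable instance : NormedAddCommGroup (Renorm φ) :=
  NormedAddCommGroup.induced (Renorm φ) ((A →L[ℂ] X) × X) (graph φ)
    fun _ _ h => congrArg Prod.snd h

noncomputable instance : NormedSpace ℂ (Renorm φ) :=
  NormedSpace.induced ℂ (Renorm φ) ((A →L[ℂ] X) × X) (graph φ)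

theorem norm_linearEquiv (z : X) : ‖linearEquiv φ z‖ = max ‖φ.flip z‖ ‖z‖ := rfl

noncomputable def equiv : X ≃L[ℂ] Renorm φ :=
  (linearEquiv φ).toContinuousLinearEquivOfBounds (max ‖φ.flip‖ 1) 1
    (fun z => by
      rw [norm_linearEquiv, max_mul_of_nonneg _ _ (norm_nonneg z), one_mul]
      exact max_le_max (φ.flip.le_opNorm z) le_rfl)
    (fun z => by rw [one_mul]; exact le_max_right _ _)

theorem norm_equiv (z : X) : ‖equiv φ z‖ = max ‖φ.flip z‖ ‖z‖ := rfl

instance [CompleteSpace X] : CompleteSpace (Renorm φ) :=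
  (completeSpace_congr (e := (equiv φ).toEquiv) (equiv φ).isUniformEmbedding).mp inferInstance

theorem norm_equiv_apply_le (hφ : ∀ a b, φ (a * b) = φ a * φ b) (a : A) (z : X) :
    ‖equiv φ (φ a z)‖ ≤ ‖a‖ * ‖equiv φ z‖ := by
  have hflip : ‖φ.flip (φ a z)‖ ≤ ‖a‖ * ‖φ.flip z‖ :=
    ContinuousLinearMap.opNorm_le_bound _ (by positivity) fun c => by
      calc ‖φ.flip (φ a z) c‖ = ‖φ.flip z (c * a)‖ := by simp [hφ]
        _ ≤ ‖φ.flip z‖ * (‖c‖ * ‖a‖) := (φ.flip z).le_opNorm_of_le (norm_mul_le c a)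
        _ = ‖a‖ * ‖φ.flip z‖ * ‖c‖ := by ring
  have hz : ‖φ a z‖ ≤ ‖a‖ * ‖φ.flip z‖ := by
    simpa [mul_comm] using (φ.flip z).le_opNorm a
  rw [norm_equiv, norm_equiv, mul_max_of_nonneg _ _ (norm_nonneg a)]
  exact max_le (hflip.trans (le_max_left _ _)) (hz.trans (le_max_left _ _))

theorem opNorm_comp_flip_le (hφ : ∀ a b, φ (a * b) = φ a * φ b) {g : StrongDual ℂ (Renorm φ)}
    (hg : ‖g‖ ≤ 1) (x : Renorm φ) :
    ‖g ∘L (equiv φ).toContinuousLinearMap ∘L φ.flip ((equiv φ).symm x)‖ ≤ ‖x‖ :=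
  ContinuousLinearMap.opNorm_le_bound _ (norm_nonneg x) fun a => by
    have := norm_equiv_apply_le φ hφ a ((equiv φ).symm x)
    rw [ContinuousLinearEquiv.apply_symm_apply] at this
    simpa [mul_comm] using g.le_of_opNorm_le_of_le hg this

end Renorm

end ContractiveRenorm

theorem IsSelfAdjoint.norm_add_smul_one_sq_le {A : Type*} [CStarAlgebra A] [Nontrivial A]
    {h : A} (hh : IsSelfAdjoint h) (t : ℝ) :
    ‖h + ((t : ℂ) * Complex.I) • (1 : A)‖ ^ 2 ≤ ‖h‖ ^ 2 + t ^ 2 := by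
  have hmul : star (h + ((t : ℂ) * Complex.I) • (1 : A)) * (h + ((t : ℂ) * Complex.I) • 1)
      = h * h + ((t : ℂ) ^ 2) • (1 : A) := by
    simp only [star_add, star_smul, star_one, hh.star_eq, star_mul', Complex.star_def,
      Complex.conj_ofReal, Complex.conj_I, add_mul, mul_add, smul_mul_assoc, mul_smul_comm,
      one_mul, mul_one]
    match_scalars <;> ring_nf; simp [Complex.I_sq]
  calc ‖h + ((t : ℂ) * Complex.I) • (1 : A)‖ ^ 2
      = ‖h * h + ((t : ℂ) ^ 2) • (1 : A)‖ := by rw [sq, ← CStarRing.norm_star_mul_self, hmul]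
    _ ≤ ‖h‖ ^ 2 + t ^ 2 := by
      refine (norm_add_le _ _).trans (add_le_add ((norm_mul_le h h).trans_eq (sq _).symm) ?_)
      simp [norm_smul]

namespace StrongDual

variable {A : Type*} [CStarAlgebra A]

variable (ω : StrongDual ℂ A) (hω : ‖ω‖ ≤ 1) (hω1 : ω 1 = 1)
include hω hω1

theorem im_apply_eq_zero_of_isSelfAdjoint [Nontrivial A] {h : A} (hh : IsSelfAdjoint h) :
    (ω h).im = 0 := by
  have key : ∀ t : ℝ, 2 * (ω h).im * t ≤ ‖h‖ ^ 2 := fun t => by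
    have hb : ‖ω h + (t : ℂ) * Complex.I‖ ≤ ‖h + ((t : ℂ) * Complex.I) • (1 : A)‖ := by
      simpa [hω1] using ω.le_of_opNorm_le hω (h + ((t : ℂ) * Complex.I) • (1 : A))
    have hsq := (pow_le_pow_left₀ (norm_nonneg _) hb 2).trans (hh.norm_add_smul_one_sq_le t)
    rw [Complex.sq_norm, Complex.normSq_apply] at hsq
    simp only [Complex.add_re, Complex.mul_re, Complex.ofReal_re, Complex.I_re, mul_zero,
      Complex.ofReal_im, Complex.I_im, mul_one, sub_self, add_zero, Complex.add_im,
      Complex.mul_im] at hsq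
    nlinarith [sq_nonneg (ω h).re, sq_nonneg (ω h).im]
  by_contra him
  have := key ((‖h‖ ^ 2 + 1) / (2 * (ω h).im))
  rw [mul_div_cancel₀ _ (mul_ne_zero two_ne_zero him)] at this
  linarith

variable [PartialOrder A] [StarOrderedRing A]

theorem apply_nonneg_of_nonneg [Nontrivial A] {b : A} (hb : 0 ≤ b) : 0 ≤ ω b := by
  have hle : ‖algebraMap ℝ A ‖b‖ - b‖ ≤ ‖b‖ := by
    refine (CStarAlgebra.norm_le_norm_of_nonneg_of_le ?_ (sub_le_self _ hb)).trans_eq ?_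
    · exact sub_nonneg.mpr (IsSelfAdjoint.le_algebraMap_norm_self hb.isSelfAdjoint)
    · simp [norm_algebraMap']
  have hω' : ω (algebraMap ℝ A ‖b‖ - b) = ‖b‖ - ω b := by
    simp [Algebra.algebraMap_eq_smul_one, ← Complex.coe_smul, hω1]
  have hre : |‖b‖ - (ω b).re| ≤ ‖b‖ := by
    have := (ω.le_of_opNorm_le hω _).trans ((one_mul _).trans_le hle)
    rw [hω'] at this
    simpa using (Complex.abs_re_le_norm _).trans this
  rw [Complex.nonneg_iff]
  exact ⟨by linarith [(abs_le.mp hre).2],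
    (ω.im_apply_eq_zero_of_isSelfAdjoint hω hω1 hb.isSelfAdjoint).symm⟩

theorem apply_eq_zero_of_apply_star_mul_self_eq_zero [Nontrivial A] {a : A}
    (ha : ω (star a * a) = 0) : ω a = 0 := by
  let f : A →ₚ[ℂ] ℂ := .mk₀ ω.toLinearMap fun _ => ω.apply_nonneg_of_nonneg hω hω1
  have hf : ∀ x, f x = ω x := fun _ => rfl
  -- Cauchy–Schwarz for `⟪1, a⟫ = ω a` in the GNS pre-Hilbert space, where `‖a‖² = ω (a⋆ a)`.
  have := norm_inner_le_norm (𝕜 := ℂ) (f.toPreGNS 1) (f.toPreGNS a)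
  rw [f.preGNS_inner_def, f.preGNS_norm_def (f.toPreGNS a)] at this
  simpa [hf, ha] using this

end StrongDual

theorem exists_positive_functional_nonzero_general
    (p : ℝ≥0∞) [Fact (1 ≤ p)]
    (J : Type*) (A : Type*) [CStarAlgebra A]
    (φ : A →L[ℂ] (lp (fun _ : J => ℂ) p →L[ℂ] lp (fun _ : J => ℂ) p))
    (hφmul : ∀ a b : A, φ (a * b) = φ a * φ b) (hφone : φ 1 = 1)
    (a₀ : A) (ha₀ : φ a₀ ≠ 0) :
    ∃ (x₀ : lp (fun _ : J => ℂ) p) (y₀ : lp (fun _ : J => ℂ) p →L[ℂ] ℂ),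
      (∀ a : A, 0 ≤ y₀ (φ (star a * a) x₀)) ∧
      y₀ (φ (star a₀ * a₀) x₀) ≠ 0 := by
  let : PartialOrder A := CStarAlgebra.spectralOrder A
  have : StarOrderedRing A := CStarAlgebra.spectralOrderedRing A
  have : Nontrivial A := ⟨⟨a₀, 0, by rintro rfl; exact ha₀ (map_zero φ)⟩⟩
  set e := Renorm.equiv φ
  obtain ⟨x, g, hg, hgx, hgT⟩ := ContinuousLinearMap.exists_norming_apply_ne_zero
    (T := e.arrowCongr e (φ a₀)) (by simpa using ha₀)
  have hx : 0 < ‖x‖ := norm_pos_iff.mpr <| by rintro rfl; simp at hgT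
  set y₀ := (‖x‖⁻¹ : ℂ) • g ∘L e.toContinuousLinearMap
  set ω : StrongDual ℂ A := y₀ ∘L φ.flip (e.symm x)
  have hω1 : ω 1 = 1 := by simp [ω, y₀, hφone, hgx, hx.ne']
  have hω : ‖ω‖ ≤ 1 := calc
    ‖ω‖ = ‖x‖⁻¹ * ‖g ∘L e.toContinuousLinearMap ∘L φ.flip (e.symm x)‖ := by
      simp [ω, y₀, ContinuousLinearMap.smul_comp, ContinuousLinearMap.comp_assoc, norm_smul]
    _ ≤ ‖x‖⁻¹ * ‖x‖ := by gcongr; exact Renorm.opNorm_comp_flip_le φ hφmul hg.le x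
    _ = 1 := inv_mul_cancel₀ hx.ne'
  refine ⟨e.symm x, y₀, fun a => ω.apply_nonneg_of_nonneg hω hω1 (star_mul_self_nonneg a),
    fun h => hgT ?_⟩
  simpa [ω, y₀, hx.ne'] using ω.apply_eq_zero_of_apply_star_mul_self_eq_zero hω hω1 h

/-- Let `1 < p < ∞`, `J` a set, `A` a unital C*-algebra,
`φ : A → B(ℓᵖ(J))` a unital (bounded, multiplicative) homomorphism, and `a₀ ∈ A` with
`φ(a₀) ≠ 0`. Then there are `x₀ ∈ ℓᵖ(J)` and a bounded linear functional `y₀*` on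
`ℓᵖ(J)` such that `ω(a) = y₀*(φ(a)x₀)` is a positive linear functional on `A` with
`ω(a₀* a₀) ≠ 0`. -/
theorem exists_positive_functional_nonzero
    (p : ℝ≥0∞) [Fact (1 ≤ p)] (hp1 : 1 < p) (hp2 : p ≠ ⊤)
    (J : Type*) (A : Type*) [CStarAlgebra A]
    (φ : A →L[ℂ] (lp (fun _ : J => ℂ) p →L[ℂ] lp (fun _ : J => ℂ) p))
    (hφmul : ∀ a b : A, φ (a * b) = φ a * φ b) (hφone : φ 1 = 1)
    (a₀ : A) (ha₀ : φ a₀ ≠ 0) :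
    ∃ (x₀ : lp (fun _ : J => ℂ) p) (y₀ : lp (fun _ : J => ℂ) p →L[ℂ] ℂ),
      (∀ a : A, 0 ≤ y₀ (φ (star a * a) x₀)) ∧
      y₀ (φ (star a₀ * a₀) x₀) ≠ 0 :=
  exists_positive_functional_nonzero_general p J A φ hφmul hφone a₀ ha₀
end
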